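/- arXiv:1011.4532 — 4 statements merged into one kernel-verified Lean document; each statement's English description precedes it below -/
import Mathlib

section
/- In a balanced strictly binary tree with u leaves, any set of r nodes has at most O(r·(1 + log₂(u/r))) distinct ancestors (where each node is counted as an ancestor of itself). Concretely, the number of nodes lying on root-to-node paths for r given nodes is at most c·(r + r·log₂(u/r)) for some absolute constant c. -/
/-- A strictly binary tree with natural-number-labeled leaves (a wavelet tree shape). -/
inductive BTree where
  | leaf : ℕ → BTree
  | node : BTree → BTree → BTree

namespace BTree

/-- The leaves of the tree, in left-to-right order. -/
def leaves : BTree → List ℕ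
  | leaf a => [a]
  | node l r => l.leaves ++ r.leaves

/-- Number of leaves. -/
def numLeaves (t : BTree) : ℕ := t.leaves.length

/-- Balanced: at every node, the numbers of leaves of the two subtrees differ by at most 1. -/
def balanced : BTree → Prop
  | leaf _ => True
  | node l r => ((l.numLeaves : ℤ) - (r.numLeaves : ℤ) ≤ 1) ∧
      ((r.numLeaves : ℤ) - (l.numLeaves : ℤ) ≤ 1) ∧ l.balanced ∧ r.balanced

/-- A (root-to-node) path, given as a list of booleans (`false` = go left). -/
def validPath : BTree → List Bool → Prop
  | _, [] => True
  | leaf _, _ :: _ => False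
  | node l r, b :: p => if b then r.validPath p else l.validPath p

/-- The subtree reached by following a path. -/
def subtreeAt : BTree → List Bool → Option BTree
  | t, [] => some t
  | leaf _, _ :: _ => none
  | node l r, b :: p => if b then r.subtreeAt p else l.subtreeAt p

/-- The index (0-based, in left-to-right leaf order) of the first leaf below the node at a path. -/
def pathOffset : BTree → List Bool → ℕ
  | _, [] => 0
  | leaf _, _ :: _ => 0
  | node l r, b :: p => if b then l.numLeaves + r.pathOffset p else l.pathOffset p

/-- Number of leaves below the node at a path (0 if the path is invalid). -/
def pathLeaves (t : BTree) (p : List Bool) : ℕ := ((t.subtreeAt p).map numLeaves).getD 0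

/-- The set of (positions of) leaves descending from the node at a path. -/
def leafInterval (t : BTree) (p : List Bool) : Finset ℕ :=
  Finset.Ico (t.pathOffset p) (t.pathOffset p + t.pathLeaves p)

end BTree

/-! The ancestors of the `r` given nodes at depth `d` are the length-`d` prefixes of their paths,
so there are at most `min r (2 ^ d)` of them, and balance bounds the depth by `⌈log₂ u⌉`.
The levels up to `⌊log₂ r⌋` then contribute fewer than `2 r` ancestors, and each of the remaining
`⌈log₂ u⌉ - ⌊log₂ r⌋ ≤ ⌊log₂ (u / r)⌋ + 2` levels at most `r`, for `4 (r + r ⌊log₂ (u / r)⌋)`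
in total. -/

theorem Nat.clog_lt_clog_of_mul_le {b c n : ℕ} (hb : 1 < b) (hn : 2 ≤ n)
    (hc : b * c ≤ n + b - 1) : Nat.clog b c < Nat.clog b n := by
  rw [Nat.clog_of_two_le hb hn, Nat.lt_succ_iff]
  exact Nat.clog_mono_right b ((Nat.le_div_iff_mul_le (by omega)).mpr (by rwa [mul_comm]))

theorem Nat.sum_range_min_two_pow_le (r H : ℕ) :
    ∑ d ∈ Finset.range (H + 1), min r (2 ^ d) ≤ 2 * r + r * (H - Nat.log 2 r) := by
  induction H with
  | zero => exact (Finset.sum_range_one _).trans_le ((min_le_left _ _).trans (by omega))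
  | succ H ih =>
    by_cases hH : H + 1 ≤ Nat.log 2 r
    · have hr : r ≠ 0 := by rintro rfl; simp at hH
      calc ∑ d ∈ Finset.range (H + 1 + 1), min r (2 ^ d)
          ≤ ∑ d ∈ Finset.range (H + 1 + 1), 2 ^ d :=
            Finset.sum_le_sum fun d _ => min_le_right _ _
        _ ≤ 2 ^ (Nat.log 2 r + 1) :=
          (Nat.geomSum_lt le_rfl fun d hd => by rw [Finset.mem_range] at hd; omega).le
        _ ≤ 2 * r := by rw [pow_succ']; exact Nat.mul_le_mul_left 2 (Nat.pow_log_le_self 2 hr)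
        _ ≤ _ := Nat.le_add_right _ _
    · rw [Finset.sum_range_succ]
      have hstep : r * (H - Nat.log 2 r) + r = r * (H + 1 - Nat.log 2 r) := by
        rw [← Nat.mul_succ]; congr 1; omega
      have hlevel := min_le_left r (2 ^ (H + 1))
      omega

theorem Nat.clog_two_le_log_div_add_log_add_two {u r : ℕ} (hr : 0 < r) :
    Nat.clog 2 u ≤ Nat.log 2 (u / r) + Nat.log 2 r + 2 := by
  rw [Nat.clog_le_iff_le_pow one_lt_two]
  calc u ≤ (u / r + 1) * r := (Nat.lt_div_mul_add hr).le.trans_eq (by ring)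
    _ ≤ 2 ^ (Nat.log 2 (u / r) + 1) * 2 ^ (Nat.log 2 r + 1) :=
        Nat.mul_le_mul (Nat.lt_pow_succ_log_self one_lt_two _)
          (Nat.lt_pow_succ_log_self one_lt_two _).le
    _ = 2 ^ (Nat.log 2 (u / r) + Nat.log 2 r + 2) := by rw [← pow_add]; ring_nf

namespace List

variable {α : Type*} [DecidableEq α]

theorem card_filter_length_eq_le_card_pow [Fintype α] (A : Finset (List α)) (d : ℕ) :
    (A.filter (·.length = d)).card ≤ Fintype.card α ^ d :=
  calc (A.filter (·.length = d)).card
      ≤ (Finset.univ.image fun v : List.Vector α d => v.toList).card :=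
        Finset.card_le_card fun q hq =>
          Finset.mem_image.mpr ⟨⟨q, (Finset.mem_filter.mp hq).2⟩, Finset.mem_univ _, rfl⟩
    _ ≤ Fintype.card (List.Vector α d) := Finset.card_image_le
    _ = Fintype.card α ^ d := card_vector d

theorem card_filter_length_eq_biUnion_inits_le (P : Finset (List α)) (d : ℕ) :
    ((P.biUnion fun p => p.inits.toFinset).filter (·.length = d)).card ≤ P.card := by
  refine (Finset.card_le_card fun q hq => ?_).trans (Finset.card_image_le (f := take d))
  simp only [Finset.mem_filter, Finset.mem_biUnion, List.mem_toFinset, List.mem_inits] at hq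
  obtain ⟨⟨p, hp, hqp⟩, rfl⟩ := hq
  exact Finset.mem_image.mpr ⟨p, hp, (List.prefix_iff_eq_take.mp hqp).symm⟩

theorem card_biUnion_inits_le_sum_min [Fintype α] {P : Finset (List α)}
    {H : ℕ} (hP : ∀ p ∈ P, p.length ≤ H) :
    (P.biUnion fun p => p.inits.toFinset).card ≤
      ∑ d ∈ Finset.range (H + 1), min P.card (Fintype.card α ^ d) := by
  rw [Finset.card_eq_sum_card_fiberwise (f := List.length) (t := Finset.range (H + 1))]
  · exact Finset.sum_le_sum fun d _ =>
      le_min (card_filter_length_eq_biUnion_inits_le P d) (card_filter_length_eq_le_card_pow _ d)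
  · intro q hq
    simp only [Finset.mem_coe, Finset.mem_biUnion, List.mem_toFinset, List.mem_inits] at hq
    obtain ⟨p, hp, hqp⟩ := hq
    exact Finset.mem_range_succ_iff.mpr (hqp.length_le.trans (hP p hp))

end List

namespace BTree

theorem one_le_numLeaves (t : BTree) : 1 ≤ t.numLeaves := by
  induction t with
  | leaf => simp [numLeaves, leaves]
  | node l r ihl ihr => simp only [numLeaves, leaves, List.length_append] at *; omega

theorem numLeaves_node (l r : BTree) : (node l r).numLeaves = l.numLeaves + r.numLeaves := by
  simp [numLeaves, leaves]

theorem length_le_clog_numLeaves {t : BTree} (ht : t.balanced) {p : List Bool}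
    (hp : t.validPath p) : p.length ≤ Nat.clog 2 t.numLeaves := by
  induction t generalizing p with
  | leaf => cases p <;> simp_all [validPath]
  | node l r ihl ihr =>
    obtain ⟨hlr, hrl, hl, hr⟩ := ht
    rcases p with _ | ⟨b, q⟩
    · simp
    have hn := numLeaves_node l r
    have := l.one_le_numLeaves
    have := r.one_le_numLeaves
    rw [List.length_cons, Nat.add_one_le_iff]
    cases b
    · exact (ihl hl (by simpa [validPath] using hp)).trans_lt
        (Nat.clog_lt_clog_of_mul_le one_lt_two (by omega) (by omega))
    · exact (ihr hr (by simpa [validPath] using hp)).trans_lt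
        (Nat.clog_lt_clog_of_mul_le one_lt_two (by omega) (by omega))

end BTree

/-- In a balanced strictly binary tree with `u` leaves, any set of `r` nodes has at most
`c·(r + r·log₂(u/r))` distinct ancestors (each node counting as an ancestor of itself),
for some absolute constant `c`. Nodes are identified with root-to-node paths, and the
ancestors of a node are the prefixes of its path. -/
theorem ancestors_of_node_set :
    ∃ c : ℕ, 0 < c ∧
      ∀ (t : BTree) (P : Finset (List Bool)),
        t.balanced → (∀ p ∈ P, t.validPath p) →
        (P.biUnion fun p => p.inits.toFinset).card ≤
          c * (P.card + P.card * Nat.log 2 (t.numLeaves / P.card)) := by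
  refine ⟨4, by norm_num, fun t P ht hP => ?_⟩
  rcases P.eq_empty_or_nonempty with rfl | hne
  · simp
  have hsum := List.card_biUnion_inits_le_sum_min fun p hp =>
    BTree.length_le_clog_numLeaves ht (hP p hp)
  have hdepth := Nat.clog_two_le_log_div_add_log_add_two (u := t.numLeaves) hne.card_pos
  rw [Fintype.card_bool] at hsum
  calc (P.biUnion fun p => p.inits.toFinset).card
      ≤ 2 * P.card + P.card * (Nat.clog 2 t.numLeaves - Nat.log 2 P.card) :=
        hsum.trans (Nat.sum_range_min_two_pow_le _ _)
    _ ≤ 2 * P.card + P.card * (Nat.log 2 (t.numLeaves / P.card) + 2) := by gcongr; omega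
    _ ≤ 4 * (P.card + P.card * Nat.log 2 (t.numLeaves / P.card)) := by nlinarith
end

section
/- Let S be a sequence of length n over a linearly ordered alphabet, and let 1 ≤ i ≤ j ≤ n and 1 ≤ k ≤ j−i+1. Let n_l be the number of positions p ∈ [i,j] with S[p] belonging to the 'left half' L of the alphabet (a downward-closed set of symbols). If k ≤ n_l, then the k-th smallest element of the multiset {S[p] : i ≤ p ≤ j} equals the k-th smallest element of the sub-multiset of those values lying in L; otherwise it equals the (k − n_l)-th smallest element of the sub-multiset of values lying outside L. -/
/-- The `k`-th smallest element (1-based) of the multiset given by a list. -/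
def kthSmallest {α : Type*} [LinearOrder α] [Inhabited α] (l : List α) (k : ℕ) : α :=
  (l.mergeSort (fun a b => decide (a ≤ b))).getD (k - 1) default

/-!
Since `L` is a lower set, every value in `L` lies below every value outside it, so the sorted
list is the sorted part in `L` followed by the sorted part outside `L` (both sides are sorted
permutations of the list). Its `k`-th entry therefore lies in the first block exactly when
`k ≤ n_l`.
-/

open List

section

variable {α : Type*} [LinearOrder α] {L : Set α} [DecidablePred (· ∈ L)]

theorem mergeSort_eq_mergeSort_filter_mem_append (hL : IsLowerSet L) (l : List α) :
    l.mergeSort (fun a b => decide (a ≤ b)) =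
      (l.filter (· ∈ L)).mergeSort (fun a b => decide (a ≤ b)) ++
        (l.filter (· ∉ L)).mergeSort (fun a b => decide (a ≤ b)) := by
  refine Perm.eq_of_pairwise' (r := (· ≤ ·)) (pairwise_mergeSort' _ l) ?_ ?_
  · refine pairwise_append.2 ⟨pairwise_mergeSort' _ _, pairwise_mergeSort' _ _, ?_⟩
    intro a ha b hb
    simp only [mem_mergeSort, mem_filter, decide_eq_true_eq] at ha hb
    exact le_of_not_ge fun hba => hb.2 (hL hba ha.2)
  · calc l.mergeSort (fun a b => decide (a ≤ b))
        ~ l := mergeSort_perm _ _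
      _ ~ l.filter (· ∈ L) ++ l.filter (· ∉ L) := by
          simpa only [decide_not] using (filter_append_perm (· ∈ L) l).symm
      _ ~ _ := (mergeSort_perm _ _).symm.append (mergeSort_perm _ _).symm

variable [Inhabited α]

theorem kthSmallest_eq_kthSmallest_filter_mem (hL : IsLowerSet L) {l : List α} {k : ℕ}
    (hk₀ : 1 ≤ k) (hk : k ≤ (l.filter (· ∈ L)).length) :
    kthSmallest l k = kthSmallest (l.filter (· ∈ L)) k := by
  rw [kthSmallest, mergeSort_eq_mergeSort_filter_mem_append hL, getD_append]
  · rfl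
  · rw [length_mergeSort]
    omega

theorem kthSmallest_eq_kthSmallest_filter_notMem (hL : IsLowerSet L) {l : List α} {k : ℕ}
    (hk : (l.filter (· ∈ L)).length < k) :
    kthSmallest l k = kthSmallest (l.filter (· ∉ L)) (k - (l.filter (· ∈ L)).length) := by
  rw [kthSmallest, mergeSort_eq_mergeSort_filter_mem_append hL, getD_append_right,
    length_mergeSort, kthSmallest, Nat.sub_right_comm]
  exact (length_mergeSort _).trans_le (by omega)

end

theorem rqq_recursion_invariant_general {α : Type*} [LinearOrder α] [Inhabited α]
    (S : List α) (L : Set α) [DecidablePred (· ∈ L)]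
    (hL : ∀ a b : α, a ≤ b → b ∈ L → a ∈ L)
    (i j k : ℕ) (hk1 : 1 ≤ k) :
    let sub := (S.drop i).take (j - i + 1)
    let nl := (sub.filter (fun a => decide (a ∈ L))).length
    (k ≤ nl →
      kthSmallest sub k = kthSmallest (sub.filter (fun a => decide (a ∈ L))) k) ∧
    (nl < k →
      kthSmallest sub k = kthSmallest (sub.filter (fun a => decide (a ∉ L))) (k - nl)) := by
  have hL : IsLowerSet L := fun b a hab hb => hL a b hab hb
  exact ⟨kthSmallest_eq_kthSmallest_filter_mem hL hk1,
    kthSmallest_eq_kthSmallest_filter_notMem hL⟩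

/-- Correctness invariant of the wavelet-tree range-quantile recursion: with `L` a
downward-closed set of symbols and `n_l` the number of positions of the range whose
symbol lies in `L`, if `k ≤ n_l` the `k`-th smallest value of the range is the `k`-th
smallest among the values in `L`, and otherwise it is the `(k − n_l)`-th smallest among
the values outside `L`. (Positions are 0-based; the range is `S[i..j]`.) -/
theorem rqq_recursion_invariant {α : Type*} [LinearOrder α] [Inhabited α]
    (S : List α) (L : Set α) [DecidablePred (· ∈ L)]
    (hL : ∀ a b : α, a ≤ b → b ∈ L → a ∈ L)
    (i j k : ℕ) (hij : i ≤ j) (hj : j < S.length) (hk1 : 1 ≤ k) (hk2 : k ≤ j - i + 1) :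
    let sub := (S.drop i).take (j - i + 1)
    let nl := (sub.filter (fun a => decide (a ∈ L))).length
    (k ≤ nl →
      kthSmallest sub k = kthSmallest (sub.filter (fun a => decide (a ∈ L))) k) ∧
    (nl < k →
      kthSmallest sub k = kthSmallest (sub.filter (fun a => decide (a ∉ L))) (k - nl)) :=
  rqq_recursion_invariant_general S L hL i j k hk1
end

section
/- Let S be a sequence over a linearly ordered alphabet and let L be a downward-closed subset of the alphabet with complement R. Fix a range [i,j] and a threshold x. If x ∈ R, then the smallest value ≥ x occurring in S[i..j] (if it exists) occurs among the positions of [i,j] whose symbols lie in R. If x ∈ L, then the smallest value ≥ x in S[i..j] is: the smallest value ≥ x among positions with symbols in L if such a value exists, and otherwise the minimum value among positions with symbols in R (if any). -/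
/-! Values not in the lower set `L` lie above every value in it. Hence for `x ∉ L` every
value `≥ x` is outside `L`, while for `x ∈ L` every value outside `L` is `≥ x`; and a
nonempty part of a list lying in `L` already contains the minimum of the whole list. -/

theorem List.min?_filter_of_isLowerSet {α : Type*} [LinearOrder α] {s : Set α}
    [DecidablePred (· ∈ s)] (hs : IsLowerSet s) {l : List α}
    (hne : l.filter (· ∈ s) ≠ []) : (l.filter (· ∈ s)).min? = l.min? := by
  obtain ⟨m, hm⟩ := Option.ne_none_iff_exists'.mp (mt List.min?_eq_none_iff.mp hne)
  obtain ⟨hm_mem, hm_le⟩ := List.min?_eq_some_iff.mp hm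
  obtain ⟨hml, hms⟩ := List.mem_filter.mp hm_mem
  refine hm.trans (List.min?_eq_some_iff.mpr ⟨hml, fun b hb => ?_⟩).symm
  by_cases hbs : b ∈ s
  · exact hm_le b (List.mem_filter.mpr ⟨hb, decide_eq_true hbs⟩)
  · exact le_of_not_ge fun hbm => hbs (hs hbm (of_decide_eq_true hms))

theorem rnv_recursion_invariant_general {α : Type*} [LinearOrder α]
    (S : List α) (L : Set α) [DecidablePred (· ∈ L)]
    (hL : ∀ a b : α, a ≤ b → b ∈ L → a ∈ L)
    (i j : ℕ) (x : α) :
    let sub := (S.drop i).take (j - i + 1)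
    let big := sub.filter (fun a => decide (x ≤ a))
    let leftGe := sub.filter (fun a => decide (a ∈ L ∧ x ≤ a))
    let rightAll := sub.filter (fun a => decide (a ∉ L))
    (x ∉ L →
      big.min? = (sub.filter (fun a => decide (a ∉ L ∧ x ≤ a))).min?) ∧
    (x ∈ L →
      (leftGe ≠ [] → big.min? = leftGe.min?) ∧
      (leftGe = [] → big.min? = rightAll.min?)) := by
  intro sub big leftGe rightAll
  have hLower : IsLowerSet L := fun b a hab hb => hL a b hab hb
  refine ⟨fun hx => ?_, fun hx => ⟨fun hne => ?_, fun hemp => ?_⟩⟩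
  · congr 1
    refine List.filter_congr fun a _ => decide_eq_decide.mpr ?_
    exact ⟨fun hxa => ⟨fun ha => hx (hLower hxa ha), hxa⟩, And.right⟩
  · have hleft : leftGe = big.filter (· ∈ L) := by
      simp only [leftGe, big, List.filter_filter, Bool.decide_and]
    rw [hleft] at hne ⊢
    exact (List.min?_filter_of_isLowerSet hLower hne).symm
  · congr 1
    refine List.filter_congr fun a ha => decide_eq_decide.mpr ⟨fun hxa haL => ?_, fun haL => ?_⟩
    · have haLeft : a ∈ leftGe := List.mem_filter.mpr ⟨ha, decide_eq_true ⟨haL, hxa⟩⟩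
      exact List.not_mem_nil (hemp ▸ haLeft)
    · exact le_of_not_ge fun hax => haL (hLower hax hx)

/-- Correctness invariant of the wavelet-tree range-next-value recursion. Let `L` be a
downward-closed set of symbols with complement `R`, and consider the range `S[i..j]`
(0-based positions) and a threshold `x`.
* If `x ∈ R`, the smallest value `≥ x` occurring in the range (as an optional minimum)
  equals the smallest value `≥ x` among the positions whose symbols lie in `R`.
* If `x ∈ L`, the smallest value `≥ x` in the range is the smallest value `≥ x` among
  the positions with symbols in `L` when such a value exists, and otherwise the minimum
  value among the positions with symbols in `R` (if any). -/
theorem rnv_recursion_invariant {α : Type*} [LinearOrder α]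
    (S : List α) (L : Set α) [DecidablePred (· ∈ L)]
    (hL : ∀ a b : α, a ≤ b → b ∈ L → a ∈ L)
    (i j : ℕ) (x : α) (hij : i ≤ j) (hj : j < S.length) :
    let sub := (S.drop i).take (j - i + 1)
    let big := sub.filter (fun a => decide (x ≤ a))
    let leftGe := sub.filter (fun a => decide (a ∈ L ∧ x ≤ a))
    let rightAll := sub.filter (fun a => decide (a ∉ L))
    (x ∉ L →
      big.min? = (sub.filter (fun a => decide (a ∉ L ∧ x ≤ a))).min?) ∧
    (x ∈ L →
      (leftGe ≠ [] → big.min? = leftGe.min?) ∧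
      (leftGe = [] → big.min? = rightAll.min?)) :=
  rnv_recursion_invariant_general S L hL i j x
end

section
/- Term-frequency decoding from run-length bitmaps: let a list of term frequencies tf[1..df] be nonincreasing with v distinct values, let T[1..M] (M = tf[1]) mark the distinct values (T[x] = 1 iff x is a value taken by tf), and let R[1..df] mark the positions where the value changes (R[1] = 1 and R[i] = 1 iff tf[i] ≠ tf[i−1]). Then for all 1 ≤ i ≤ df: tf[i] = select_1(T, v − rank_1(R, i) + 1). -/
/-- `rank₁(R,i)`: number of 1-bits among the first `i` bits of `R`. -/
def rank1 (R : List Bool) (i : ℕ) : ℕ := (R.take i).count true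

/-- `select₁(T,j)`: the 1-based position of the `j`-th 1-bit of `T`. -/
def select1 (T : List Bool) (j : ℕ) : ℕ :=
  ((List.range T.length).filter fun p => decide (T.getD p false = true)).getD (j - 1) 0 + 1

/-! Writing `y = tf[i]`, the run heads among the first `i` positions are the first occurrences
of the distinct values `≥ y`, so `v - rank₁(R, i)` counts the distinct values `< y`. These are
exactly the 1-bits of `T` before position `y`, and `T[y] = 1`; since `select₁` inverts `rank₁`
at 1-bits, the decoded value is `y`. -/

section Bitmap

variable (f : ℕ → Bool) {n : ℕ}

theorem rank1_map_range {i : ℕ} (hi : i ≤ n) :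
    rank1 ((List.range n).map f) i = (List.range i).countP f := by
  rw [rank1, ← List.map_take, List.take_range, min_eq_left hi, List.count_eq_countP,
    List.countP_map]
  simp only [Function.comp_def, beq_true]

theorem getD_filter_range_countP {p : ℕ} (hp : p < n) (hfp : f p = true) :
    ((List.range n).filter f).getD ((List.range p).countP f) 0 = p := by
  obtain ⟨m, rfl⟩ := Nat.exists_eq_add_of_le hp
  rw [List.range_add, List.range_succ, List.filter_append, List.filter_append,
    List.countP_eq_length_filter, List.append_assoc, List.getD_append_right _ _ _ _ le_rfl]
  simp [hfp]

theorem select1_map_range {p : ℕ} (hp : p < n) (hfp : f p = true) :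
    select1 ((List.range n).map f) ((List.range p).countP f + 1) = p + 1 := by
  have hpositions : ((List.range ((List.range n).map f).length).filter
      fun q => decide (((List.range n).map f).getD q false = true)) = (List.range n).filter f := by
    rw [List.length_map, List.length_range]
    refine List.filter_congr fun q hq => ?_
    rw [List.getD_eq_getElem _ _ (by simpa using hq)]
    simp
  rw [select1, hpositions, Nat.add_sub_cancel, getD_filter_range_countP f hp hfp]

end Bitmap

namespace List.SortedGE

variable {α : Type*} [LinearOrder α] {l : List α}

theorem getElem_mem_take_iff (hl : l.SortedGE) {k : ℕ} (hk : k < l.length) :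
    l[k] ∈ l.take k ↔ k ≠ 0 ∧ l[k] = l[k - 1] := by
  constructor
  · intro hmem
    obtain ⟨j, hj, hje⟩ := List.mem_iff_getElem.mp hmem
    rw [List.length_take] at hj
    rw [List.getElem_take] at hje
    refine ⟨by omega, le_antisymm (hl.getElem_ge_getElem_of_le (by omega)) ?_⟩
    exact hje ▸ hl.getElem_ge_getElem_of_le (by omega)
  · rintro ⟨hk0, heq⟩
    rw [heq]
    exact List.mem_iff_getElem.mpr ⟨k - 1, by rw [List.length_take]; omega, List.getElem_take⟩

theorem toFinset_take_eq_filter (hl : l.SortedGE) {i : ℕ} (hi0 : 0 < i) (hi : i ≤ l.length) :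
    (l.take i).toFinset = l.toFinset.filter (l[i - 1] ≤ ·) := by
  ext x
  simp only [Finset.mem_filter, List.mem_toFinset, List.mem_iff_getElem, List.length_take,
    List.getElem_take]
  constructor
  · rintro ⟨j, hj, rfl⟩
    exact ⟨⟨j, by omega, rfl⟩, hl.getElem_ge_getElem_of_le (by omega)⟩
  · rintro ⟨⟨j, hj, rfl⟩, hle⟩
    by_cases hji : j < i
    · exact ⟨j, by omega, rfl⟩
    · exact ⟨i - 1, by omega, le_antisymm hle (hl.getElem_ge_getElem_of_le (by omega))⟩

theorem card_toFinset_take_eq_countP (hl : l.SortedGE) (d : α) {i : ℕ} (hi : i ≤ l.length) :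
    (l.take i).toFinset.card =
      (List.range i).countP fun k => decide (k = 0 ∨ l.getD k d ≠ l.getD (k - 1) d) := by
  induction i with
  | zero => simp
  | succ k ih =>
    have hk : k < l.length := hi
    rw [List.take_add_one, List.getElem?_eq_getElem hk, Option.toList_some, List.toFinset_append,
      List.range_succ, List.countP_append, ← ih hk.le, List.countP_singleton,
      List.getD_eq_getElem _ _ hk, List.getD_eq_getElem _ _ (by omega : k - 1 < l.length)]
    simp only [List.toFinset_cons, List.toFinset_nil, insert_empty_eq, Finset.union_singleton]
    by_cases hnew : l[k] ∈ l.take k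
    · rw [Finset.card_insert_of_mem (List.mem_toFinset.mpr hnew)]
      simp [(hl.getElem_mem_take_iff hk).mp hnew]
    · rw [Finset.card_insert_of_notMem (mt List.mem_toFinset.mp hnew)]
      have hhead : k = 0 ∨ l[k] ≠ l[k - 1] := by
        simpa only [not_and_or, not_not] using (hl.getElem_mem_take_iff hk).not.mp hnew
      simp [hhead]

end List.SortedGE

theorem List.countP_range_add_one_mem {l : List ℕ} (hpos : ∀ x ∈ l, 0 < x) (p : ℕ) :
    (List.range p).countP (fun x => decide (x + 1 ∈ l)) = (l.toFinset.filter (· < p + 1)).card := by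
  rw [List.countP_eq_length_filter, ← List.toFinset_card_of_nodup (List.nodup_range.filter _),
    List.toFinset_filter, List.toFinset_range]
  refine Finset.card_nbij' (· + 1) (· - 1) ?_ ?_ ?_ ?_ <;> intro x hx <;>
    simp only [Finset.coe_filter, List.mem_toFinset, Finset.mem_range, decide_eq_true_eq,
      Set.mem_ofPred_eq] at hx ⊢
  · exact ⟨hx.2, by omega⟩
  · have := hpos x hx.1
    exact ⟨by omega, by rw [Nat.sub_add_cancel this]; exact hx.1⟩
  · simp
  · have := hpos x hx.1
    omega

theorem tf_decoding_general (tf : List ℕ)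
    (hpos : ∀ x ∈ tf, 0 < x)
    (hmono : tf.Pairwise (fun a b => b ≤ a)) :
    let df := tf.length
    let v := tf.dedup.length
    let M := tf.getD 0 0
    let T : List Bool := (List.range M).map fun x => decide ((x + 1) ∈ tf)
    let R : List Bool := (List.range df).map fun i0 =>
      decide (i0 = 0 ∨ tf.getD i0 0 ≠ tf.getD (i0 - 1) 0)
    ∀ i, 1 ≤ i → i ≤ df →
      tf.getD (i - 1) 0 = select1 T (v - rank1 R i + 1) := by
  intro df v M T R i hi hidf
  have hsorted : tf.SortedGE := hmono.sortedGE
  have hi' : i - 1 < tf.length := by omega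
  rw [List.getD_eq_getElem _ _ hi']
  set y := tf[i - 1]
  have hy_pos : 0 < y := hpos y (List.getElem_mem hi')
  have hy_mem : (y - 1) + 1 ∈ tf := by
    rw [Nat.sub_add_cancel hy_pos]
    exact List.getElem_mem hi'
  have hy_le : y ≤ M := by
    show y ≤ tf.getD 0 0
    rw [List.getD_eq_getElem _ _ (by omega)]
    exact hsorted.getElem_ge_getElem_of_le (Nat.zero_le _)
  have hrankR : rank1 R i = (tf.toFinset.filter (y ≤ ·)).card := by
    rw [rank1_map_range _ hidf, ← hsorted.card_toFinset_take_eq_countP 0 hidf,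
      hsorted.toFinset_take_eq_filter (by omega) hidf]
  have hrankT : v - rank1 R i = (List.range (y - 1)).countP fun x => decide (x + 1 ∈ tf) := by
    rw [List.countP_range_add_one_mem hpos, Nat.sub_add_cancel hy_pos, hrankR,
      show v = tf.toFinset.card from (List.card_toFinset tf).symm,
      ← Finset.card_filter_add_card_filter_not (p := (y ≤ ·))]
    simp only [not_le, Nat.add_sub_cancel_left]
  rw [hrankT, select1_map_range _ (by omega) (decide_eq_true hy_mem), Nat.sub_add_cancel hy_pos]

/-- Term-frequency decoding from run-length bitmaps. Let `tf[1..df]` be a nonincreasing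
list of positive term frequencies with `v` distinct values, let `T[1..M]` (`M = tf[1]`)
mark the distinct values (`T[x] = 1` iff `x` is a value taken by `tf`), and let
`R[1..df]` mark the run heads (`R[1] = 1`, and `R[i] = 1` iff `tf[i] ≠ tf[i−1]`).
Then for all `1 ≤ i ≤ df`: `tf[i] = select₁(T, v − rank₁(R, i) + 1)`. -/
theorem tf_decoding (tf : List ℕ) (hne : tf ≠ [])
    (hpos : ∀ x ∈ tf, 0 < x)
    (hmono : tf.Pairwise (fun a b => b ≤ a)) :
    let df := tf.length
    let v := tf.dedup.length
    let M := tf.getD 0 0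
    let T : List Bool := (List.range M).map fun x => decide ((x + 1) ∈ tf)
    let R : List Bool := (List.range df).map fun i0 =>
      decide (i0 = 0 ∨ tf.getD i0 0 ≠ tf.getD (i0 - 1) 0)
    ∀ i, 1 ≤ i → i ≤ df →
      tf.getD (i - 1) 0 = select1 T (v - rank1 R i + 1) :=
  tf_decoding_general tf hpos hmono
end
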